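/- Let (S(t)) be a C₀-semigroup on H with generator A and let Q be a bounded self-adjoint nonnegative operator on H. Then the following are equivalent: (a) for every x ∈ dom(A*) one has Qx ∈ dom(A) and AQx = QA*x; (b) S(t)Q = QS(t)* for all t ≥ 0. -/

import Mathlib

/-!
STATEMENT 0.  Let (S(t)) be a C₀-semigroup on a separable real Hilbert space H with
generator A and let Q be a bounded self-adjoint nonnegative operator on H.  Then the
following are equivalent:
(a) for every x ∈ dom(A*) one has Qx ∈ dom(A) and AQx = QA*x;
(b) S(t)Q = QS(t)* for all t ≥ 0.

The generator is encoded by the predicate `genTo S x y`, meaning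
x ∈ dom(A) and Ax = y, i.e. (S(t)x − x)/t → y as t → 0⁺.
The adjoint of the (densely defined) generator is encoded by `adjTo S x z`, meaning
⟨Ay, x⟩ = ⟨y, z⟩ for all y ∈ dom(A); since dom(A) is dense, such z is unique, so
`adjTo S x z` means exactly x ∈ dom(A*) and A*x = z.
-/

open MeasureTheory Filter Set ContinuousLinearMap
open scoped RealInnerProductSpace

noncomputable section

variable {H : Type*} [NormedAddCommGroup H] [InnerProductSpace ℝ H] [CompleteSpace H]

/-- `x ∈ dom(A)` and `Ax = y` for the generator `A` of the semigroup `S`. -/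
def genTo (S : ℝ → H →L[ℝ] H) (x y : H) : Prop :=
  Filter.Tendsto (fun t : ℝ => t⁻¹ • (S t x - x)) (nhdsWithin 0 (Set.Ioi 0)) (nhds y)

/-- `x ∈ dom(A*)` and `A*x = z` for the adjoint of the generator of `S`
(the defining property of the adjoint of a densely defined operator). -/
def adjTo (S : ℝ → H →L[ℝ] H) (x z : H) : Prop :=
  ∀ y y' : H, genTo S y y' → ⟪y', x⟫ = ⟪y, z⟫

/-! The adjoint family `T t = (S t)†` is again a C₀-semigroup whose generator extends `A*`.
Indeed `dom(A*)` is dense, since it contains the ranges of the adjoints of `x ↦ ∫₀ᵗ S s x ds`;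
on `dom(A*)` one has `‖T t x - x‖ ≤ M ‖A* x‖ t`, which gives strong continuity, and then
`T t x - x = ∫₀ᵗ T s (A* x) ds`. Now (b) ⇒ (a) by applying `Q` to the difference quotients of `T`
at `x ∈ dom(A*)`, and (a) ⇒ (b) because `u ↦ S (t - u) (Q (T u x))` has zero right derivative
on `[0, t]` for `x ∈ dom(A*)`, which is dense. -/

open scoped Topology InnerProduct

structure IsC0Semigroup {E : Type*} [NormedAddCommGroup E] [NormedSpace ℝ E]
    (S : ℝ → E →L[ℝ] E) : Prop where
  map_zero : S 0 = 1
  map_add : ∀ s t : ℝ, 0 ≤ s → 0 ≤ t → S (s + t) = S s ∘L S t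
  continuousOn_apply : ∀ x : E, ContinuousOn (fun t => S t x) (Ici 0)

section Banach

variable {E : Type*} [NormedAddCommGroup E] [NormedSpace ℝ E]

theorem tendsto_nhdsGE_apply_of_dense {T : ℝ → E →L[ℝ] E} {M a b : ℝ} (hab : a < b)
    (hM : ∀ s ∈ Icc a b, ‖T s‖ ≤ M) {D : Set E} (hD : Dense D)
    (hlim : ∀ x ∈ D, Tendsto (fun t => T t x) (𝓝[≥] a) (𝓝 x)) (x : E) :
    Tendsto (fun t => T t x) (𝓝[≥] a) (𝓝 x) := by
  have hequi : Equicontinuous ((↑) ∘ fun s : Icc a b => T s) :=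
    ((NormedSpace.equicontinuous_TFAE fun s : Icc a b => T s).out 5 1 :
      (∃ C, ∀ s : Icc a b, ‖T s‖ ≤ C) ↔ _).1 ⟨M, fun s => hM s s.2⟩
  have hmem : a ∈ Icc a b := left_mem_Icc.2 hab.le
  simp only [← nhdsWithin_Icc_eq_nhdsGE hab, tendsto_nhdsWithin_iff_subtype hmem] at hlim ⊢
  exact (hequi _).tendsto_of_mem_closure (continuous_id.tendsto x |>.mono_left nhdsWithin_le_nhds)
    hlim (hD x)

namespace IsC0Semigroup

variable {S : ℝ → E →L[ℝ] E}

theorem apply_comm (hS : IsC0Semigroup S) {s t : ℝ} (hs : 0 ≤ s) (ht : 0 ≤ t) (x : E) :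
    S s (S t x) = S t (S s x) := by
  rw [← comp_apply, ← hS.map_add s t hs ht, add_comm, hS.map_add t s ht hs, comp_apply]

theorem exists_norm_le [CompleteSpace E] (hS : IsC0Semigroup S) (T : ℝ) :
    ∃ M, ∀ s ∈ Icc 0 T, ‖S s‖ ≤ M := by
  obtain ⟨M, hM⟩ := banach_steinhaus (g := fun s : Icc (0 : ℝ) T => S s) fun x =>
    (isCompact_Icc.exists_bound_of_continuousOn
      ((hS.continuousOn_apply x).mono fun _ h => h.1)).imp fun C hC s => hC s s.2
  exact ⟨M, fun s hs => hM ⟨s, hs⟩⟩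

theorem intervalIntegrable_apply (hS : IsC0Semigroup S) (x : E) {a b : ℝ} (ha : 0 ≤ a)
    (hb : 0 ≤ b) : IntervalIntegrable (fun s => S s x) volume a b :=
  ((hS.continuousOn_apply x).mono fun _ hs => (le_inf ha hb).trans hs.1).intervalIntegrable

theorem tendsto_apply [CompleteSpace E] (hS : IsC0Semigroup S) {α : Type*} {l : Filter α}
    {u : α → ℝ} {v : α → E} {a : ℝ} {w : E} (ha : 0 ≤ a) (hu : Tendsto u l (𝓝[Ici 0] a))
    (hv : Tendsto v l (𝓝 w)) : Tendsto (fun i => S (u i) (v i)) l (𝓝 (S a w)) := by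
  obtain ⟨M, hM⟩ := hS.exists_norm_le (a + 1)
  have hsmall : Tendsto (fun i => S (u i) (v i - w)) l (𝓝 0) := by
    have hvw : Tendsto (fun i => M * ‖v i - w‖) l (𝓝 0) := by
      simpa using (tendsto_iff_norm_sub_tendsto_zero.1 hv).const_mul M
    refine squeeze_zero_norm' ?_ hvw
    filter_upwards [hu eventually_mem_nhdsWithin,
      hu.mono_right nhdsWithin_le_nhds (gt_mem_nhds (lt_add_one a))] with i hi0 hi1
    exact (S (u i)).le_of_opNorm_le (hM _ ⟨hi0, hi1.le⟩) _
  simpa using hsmall.add (((hS.continuousOn_apply w) a ha).tendsto.comp hu)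

theorem of_tendsto_nhdsGE_zero (h0 : S 0 = 1)
    (hadd : ∀ s t : ℝ, 0 ≤ s → 0 ≤ t → S (s + t) = S s ∘L S t)
    (hbdd : ∀ T, ∃ M, ∀ s ∈ Icc 0 T, ‖S s‖ ≤ M)
    (hlim : ∀ x, Tendsto (fun t => S t x) (𝓝[≥] 0) (𝓝 x)) : IsC0Semigroup S := by
  refine ⟨h0, hadd, fun x t₀ ht₀ => ?_⟩
  obtain ⟨M, hM⟩ := hbdd (t₀ + 1)
  have hshift : ∀ {s t : ℝ}, 0 ≤ s → s ≤ t → S t x - S s x = S s (S (t - s) x - x) := by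
    intro s t hs hst
    rw [map_sub, ← comp_apply, ← hadd s _ hs (sub_nonneg.2 hst), add_sub_cancel]
  have hle : ∀ t ∈ Icc 0 (t₀ + 1), ‖S t x - S t₀ x‖ ≤ M * ‖S |t - t₀| x - x‖ := by
    intro t ht
    rcases le_total t₀ t with h | h
    · rw [hshift ht₀ h, abs_of_nonneg (sub_nonneg.2 h)]
      exact (S t₀).le_of_opNorm_le (hM t₀ ⟨ht₀, by linarith⟩) _
    · rw [← norm_neg, neg_sub, hshift ht.1 h, abs_sub_comm, abs_of_nonneg (sub_nonneg.2 h)]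
      exact (S t).le_of_opNorm_le (hM t ht) _
  have habs : Tendsto (fun t => |t - t₀|) (𝓝[Ici 0] t₀) (𝓝[≥] 0) := by
    refine tendsto_nhdsWithin_of_tendsto_nhds_of_eventually_within _ ?_
      (Eventually.of_forall fun t => mem_Ici.2 (abs_nonneg _))
    simpa using ((continuous_sub_right t₀).abs.tendsto t₀).mono_left
      (nhdsWithin_le_nhds (s := Ici 0))
  have hbound : Tendsto (fun t => M * ‖S |t - t₀| x - x‖) (𝓝[Ici 0] t₀) (𝓝 0) := by
    simpa using (tendsto_iff_norm_sub_tendsto_zero.1 ((hlim x).comp habs)).const_mul M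
  refine tendsto_iff_norm_sub_tendsto_zero.2 (squeeze_zero' (Eventually.of_forall fun _ =>
    norm_nonneg _) ?_ hbound)
  filter_upwards [eventually_mem_nhdsWithin,
    nhdsWithin_le_nhds (gt_mem_nhds (lt_add_one t₀))] with t ht ht'
  exact hle t ⟨ht, ht'.le⟩

end IsC0Semigroup

end Banach

section Calculus

variable {E : Type*} [NormedAddCommGroup E] [NormedSpace ℝ E] {S : ℝ → E →L[ℝ] E}

theorem hasDerivWithinAt_Ioi_iff_tendsto_slope_zero {f : ℝ → E} {f' : E} {b : ℝ} :
    HasDerivWithinAt f f' (Ioi b) b ↔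
      Tendsto (fun h => h⁻¹ • (f (b + h) - f b)) (𝓝[>] 0) (𝓝 f') := by
  have : 𝓝[>] b = map (fun h => b + h) (𝓝[>] 0) := by simp
  rw [hasDerivWithinAt_iff_tendsto_slope' (by simp), this, tendsto_map'_iff]
  simp [Function.comp_def, slope]

theorem hasDerivWithinAt_integral_of_continuousOn_Ici [CompleteSpace E] {f : ℝ → E}
    (hf : ContinuousOn f (Ici 0)) {b : ℝ} (hb : 0 ≤ b) :
    HasDerivWithinAt (fun u => ∫ s in 0..u, f s) (f b) (Ioi b) b := by
  have hIoi : Ioi b ⊆ Ici 0 := fun u hu => hb.trans (le_of_lt hu)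
  refine (intervalIntegral.integral_hasDerivWithinAt_right (s := Ici b) (t := Ioi b)
    ((hf.mono fun _ hs => (le_inf le_rfl hb).trans hs.1).intervalIntegrable)
    ⟨Ici 0, mem_of_superset self_mem_nhdsWithin hIoi, hf.aestronglyMeasurable measurableSet_Ici⟩
    ((hf b hb).mono hIoi)).mono Ioi_subset_Ici_self

theorem IsC0Semigroup.tendsto_smul_intervalIntegral [CompleteSpace E] (hS : IsC0Semigroup S)
    (x : E) : Tendsto (fun t => t⁻¹ • ∫ s in 0..t, S s x) (𝓝[>] 0) (𝓝 x) := by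
  simpa [hS.map_zero] using hasDerivWithinAt_Ioi_iff_tendsto_slope_zero.1
    (hasDerivWithinAt_integral_of_continuousOn_Ici (hS.continuousOn_apply x) le_rfl)

theorem norm_intervalIntegral_apply_le {M t : ℝ} (ht : 0 ≤ t) (hM : ∀ s ∈ Icc 0 t, ‖S s‖ ≤ M)
    (x : E) : ‖∫ s in 0..t, S s x‖ ≤ M * ‖x‖ * t := by
  refine (intervalIntegral.norm_integral_le_of_norm_le_const fun s hs => ?_).trans_eq
    (by rw [sub_zero, abs_of_nonneg ht])
  rw [uIoc_of_le ht] at hs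
  exact (S s).le_of_opNorm_le (hM s ⟨hs.1.le, hs.2⟩) x

def IsC0Semigroup.integralCLM [CompleteSpace E] (hS : IsC0Semigroup S) {t : ℝ} (ht : 0 ≤ t) :
    E →L[ℝ] E :=
  LinearMap.mkContinuousOfExistsBound
    { toFun := fun x => ∫ s in 0..t, S s x
      map_add' := fun x y => by
        simp only [_root_.map_add]
        exact intervalIntegral.integral_add (hS.intervalIntegrable_apply x le_rfl ht)
          (hS.intervalIntegrable_apply y le_rfl ht)
      map_smul' := fun c x => by
        simp only [_root_.map_smul]
        exact intervalIntegral.integral_smul c _ }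
    (by
      obtain ⟨M, hM⟩ := hS.exists_norm_le t
      exact ⟨M * t, fun x => (norm_intervalIntegral_apply_le ht hM x).trans_eq (by ring)⟩)

@[simp]
theorem IsC0Semigroup.integralCLM_apply [CompleteSpace E] (hS : IsC0Semigroup S) {t : ℝ}
    (ht : 0 ≤ t) (x : E) : hS.integralCLM ht x = ∫ s in 0..t, S s x :=
  rfl

end Calculus

section Generator

variable {S : ℝ → H →L[ℝ] H}

omit [CompleteSpace H] in
theorem genTo_map_of_comp_eq {T : ℝ → H →L[ℝ] H} {Q : H →L[ℝ] H}
    (hST : ∀ t : ℝ, 0 ≤ t → S t ∘L Q = Q ∘L T t) {x z : H} (h : genTo T x z) :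
    genTo S (Q x) (Q z) := by
  refine ((Q.continuous.tendsto z).comp h).congr' ?_
  filter_upwards [self_mem_nhdsWithin] with t ht
  rw [Function.comp_apply, map_smul, map_sub, ← comp_apply Q, ← hST t (le_of_lt ht),
    comp_apply]

namespace IsC0Semigroup

omit [CompleteSpace H] in
theorem hasDerivWithinAt_of_genTo (hS : IsC0Semigroup S) {x y : H} (h : genTo S x y) {s : ℝ}
    (hs : 0 ≤ s) : HasDerivWithinAt (fun t => S t x) (S s y) (Ioi s) s := by
  rw [hasDerivWithinAt_Ioi_iff_tendsto_slope_zero]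
  refine (((S s).continuous.tendsto y).comp h).congr' ?_
  filter_upwards [self_mem_nhdsWithin] with t ht
  rw [Function.comp_apply, hS.map_add s t hs (le_of_lt ht), comp_apply, map_smul, map_sub]

theorem sub_eq_integral_of_genTo (hS : IsC0Semigroup S) {x y : H} (h : genTo S x y) {t : ℝ}
    (ht : 0 ≤ t) : S t x - x = ∫ s in 0..t, S s y := by
  rw [intervalIntegral.integral_eq_sub_of_hasDeriv_right_of_le ht
    ((hS.continuousOn_apply x).mono Icc_subset_Ici_self)
    (fun s hs => hS.hasDerivWithinAt_of_genTo h hs.1.le) (hS.intervalIntegrable_apply y le_rfl ht),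
    hS.map_zero, one_apply_eq_self]

theorem genTo_of_sub_eq_integral (hS : IsC0Semigroup S) {x y : H}
    (h : ∀ᶠ t in 𝓝[>] 0, S t x - x = ∫ s in 0..t, S s y) : genTo S x y := by
  refine (hS.tendsto_smul_intervalIntegral y).congr' ?_
  filter_upwards [h] with t ht
  rw [ht]

omit [CompleteSpace H] in
theorem genTo_apply (hS : IsC0Semigroup S) {x y : H} (h : genTo S x y) {t : ℝ} (ht : 0 ≤ t) :
    genTo S (S t x) (S t y) :=
  genTo_map_of_comp_eq (fun _ hs => ContinuousLinearMap.ext fun v =>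
    (hS.apply_comm hs ht v)) h

theorem apply_intervalIntegral (hS : IsC0Semigroup S) (w : H) {h t : ℝ} (hh : 0 ≤ h)
    (ht : 0 ≤ t) : S h (∫ s in 0..t, S s w) = ∫ s in h..t + h, S s w := by
  rw [← (S h).intervalIntegral_comp_comm (hS.intervalIntegrable_apply w le_rfl ht)]
  have : ∀ s ∈ uIcc 0 t, S h (S s w) = S (s + h) w := fun s hs => by
    rw [add_comm, hS.map_add h s hh ((le_inf le_rfl ht).trans hs.1), comp_apply]
  rw [intervalIntegral.integral_congr this, intervalIntegral.integral_comp_add_right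
    (fun s => S s w), zero_add]

theorem genTo_intervalIntegral (hS : IsC0Semigroup S) (w : H) {t : ℝ} (ht : 0 ≤ t) :
    genTo S (∫ s in 0..t, S s w) (S t w - w) := by
  have hF := hasDerivWithinAt_Ioi_iff_tendsto_slope_zero.1
    (hasDerivWithinAt_integral_of_continuousOn_Ici (hS.continuousOn_apply w) ht)
  refine (hF.sub (hS.tendsto_smul_intervalIntegral w)).congr' ?_
  filter_upwards [self_mem_nhdsWithin] with h hh
  have hh : 0 ≤ h := le_of_lt hh
  rw [← smul_sub, hS.apply_intervalIntegral w hh ht, ← intervalIntegral.integral_interval_sub_left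
    (hS.intervalIntegrable_apply w le_rfl (add_nonneg ht hh))
    (hS.intervalIntegrable_apply w le_rfl hh), sub_right_comm]

end IsC0Semigroup

end Generator

theorem intervalIntegral_inner {f : ℝ → H} {a b : ℝ} (hf : IntervalIntegrable f volume a b)
    (c : H) : ∫ s in a..b, ⟪c, f s⟫ = ⟪c, ∫ s in a..b, f s⟫ := by
  simpa using (innerSL ℝ c).intervalIntegral_comp_comm hf

section Adjoint

variable {S : ℝ → H →L[ℝ] H}

def adjDomain (S : ℝ → H →L[ℝ] H) : Submodule ℝ H where
  carrier := {x | ∃ z, adjTo S x z}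
  zero_mem' := ⟨0, fun y y' _ => by simp⟩
  add_mem' := by
    rintro a b ⟨za, hza⟩ ⟨zb, hzb⟩
    exact ⟨za + zb, fun y y' hy => by
      rw [inner_add_right, inner_add_right, hza y y' hy, hzb y y' hy]⟩
  smul_mem' := by
    rintro c a ⟨za, hza⟩
    exact ⟨c • za, fun y y' hy => by
      rw [real_inner_smul_right, real_inner_smul_right, hza y y' hy]⟩

namespace IsC0Semigroup

theorem adjTo_adjoint_apply (hS : IsC0Semigroup S) {x z : H} (h : adjTo S x z) {t : ℝ}
    (ht : 0 ≤ t) : adjTo S (((S t)†) x) (((S t)†) z) := by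
  intro y y' hy
  rw [adjoint_inner_right, adjoint_inner_right]
  exact h _ _ (hS.genTo_apply hy ht)

theorem adjTo_adjoint_integralCLM (hS : IsC0Semigroup S) {t : ℝ} (ht : 0 ≤ t) (w : H) :
    adjTo S (((hS.integralCLM ht)†) w) (((S t)†) w - w) := by
  intro y y' hy
  rw [adjoint_inner_right, integralCLM_apply, ← hS.sub_eq_integral_of_genTo hy ht,
    inner_sub_left, inner_sub_right, adjoint_inner_right]

theorem dense_adjDomain (hS : IsC0Semigroup S) : Dense (adjDomain S : Set H) := by
  rw [Submodule.dense_iff_topologicalClosure_eq_top, Submodule.topologicalClosure_eq_top_iff,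
    Submodule.eq_bot_iff]
  intro v hv
  have hker : ∀ t (ht : 0 ≤ t), hS.integralCLM ht v = 0 := by
    intro t ht
    have hle : ((hS.integralCLM ht)†).range ≤ adjDomain S := by
      rintro _ ⟨w, rfl⟩
      exact ⟨_, hS.adjTo_adjoint_integralCLM ht w⟩
    have := Submodule.orthogonal_le hle hv
    rwa [orthogonal_range, adjoint_adjoint] at this
  refine tendsto_nhds_unique ((hS.tendsto_smul_intervalIntegral v).congr' ?_) tendsto_const_nhds
  filter_upwards [self_mem_nhdsWithin] with h hh
  rw [← integralCLM_apply hS (le_of_lt hh), hker h (le_of_lt hh), smul_zero]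

theorem inner_adjoint_apply_sub_of_adjTo (hS : IsC0Semigroup S) {x z : H} (h : adjTo S x z)
    {t : ℝ} (ht : 0 ≤ t) (y : H) : ⟪y, ((S t)†) x - x⟫ = ⟪∫ s in 0..t, S s y, z⟫ := by
  rw [inner_sub_right, adjoint_inner_right, ← inner_sub_left,
    h _ _ (hS.genTo_intervalIntegral y ht)]

theorem norm_adjoint_apply_sub_le_of_adjTo (hS : IsC0Semigroup S) {x z : H} (h : adjTo S x z)
    {t M : ℝ} (ht : 0 ≤ t) (hM : ∀ s ∈ Icc 0 t, ‖S s‖ ≤ M) :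
    ‖((S t)†) x - x‖ ≤ M * ‖z‖ * t := by
  set v := ((S t)†) x - x
  have hM0 : 0 ≤ M := (norm_nonneg _).trans (hM 0 ⟨le_rfl, ht⟩)
  have hsq : ‖v‖ * ‖v‖ ≤ M * ‖z‖ * t * ‖v‖ :=
    calc ‖v‖ * ‖v‖ = ⟪v, v⟫ := (real_inner_self_eq_norm_mul_norm v).symm
      _ = ⟪∫ s in 0..t, S s v, z⟫ := hS.inner_adjoint_apply_sub_of_adjTo h ht v
      _ ≤ ‖∫ s in 0..t, S s v‖ * ‖z‖ := real_inner_le_norm _ _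
      _ ≤ M * ‖v‖ * t * ‖z‖ := by gcongr; exact norm_intervalIntegral_apply_le ht hM v
      _ = M * ‖z‖ * t * ‖v‖ := by ring
  rcases (norm_nonneg v).eq_or_lt with hv | hv
  · rw [← hv]
    positivity
  · exact le_of_mul_le_mul_right hsq hv

theorem tendsto_adjoint_apply_of_adjTo (hS : IsC0Semigroup S) {x z : H} (h : adjTo S x z) :
    Tendsto (fun t => ((S t)†) x) (𝓝[≥] 0) (𝓝 x) := by
  obtain ⟨M, hM⟩ := hS.exists_norm_le 1
  have hlin : Tendsto (fun t => M * ‖z‖ * t) (𝓝[≥] 0) (𝓝 0) := by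
    simpa using ((continuous_const_mul (M * ‖z‖)).tendsto 0).mono_left nhdsWithin_le_nhds
  refine tendsto_iff_norm_sub_tendsto_zero.2
    (squeeze_zero' (Eventually.of_forall fun _ => norm_nonneg _) ?_ hlin)
  filter_upwards [Icc_mem_nhdsGE zero_lt_one] with t ht
  exact hS.norm_adjoint_apply_sub_le_of_adjTo h ht.1 fun s hs => hM s ⟨hs.1, hs.2.trans ht.2⟩

theorem adjoint (hS : IsC0Semigroup S) : IsC0Semigroup fun t => (S t)† := by
  have hnorm : ∀ t, ‖(S t)†‖ = ‖S t‖ := fun t =>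
    LinearIsometryEquiv.norm_map ContinuousLinearMap.adjoint (S t)
  obtain ⟨M, hM⟩ := hS.exists_norm_le 1
  refine .of_tendsto_nhdsGE_zero (by rw [hS.map_zero, adjoint_one]) (fun s t hs ht => ?_)
    (fun T => (hS.exists_norm_le T).imp fun M hM s hs => (hnorm s).trans_le (hM s hs))
    (tendsto_nhdsGE_apply_of_dense zero_lt_one (fun s hs => (hnorm s).trans_le (hM s hs))
      hS.dense_adjDomain fun x ⟨z, hz⟩ => hS.tendsto_adjoint_apply_of_adjTo hz)
  rw [add_comm, hS.map_add t s ht hs, adjoint_comp]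

theorem genTo_adjoint_of_adjTo (hS : IsC0Semigroup S) {x z : H} (h : adjTo S x z) :
    genTo (fun t => (S t)†) x z := by
  refine hS.adjoint.genTo_of_sub_eq_integral ?_
  filter_upwards [self_mem_nhdsWithin] with t ht
  refine ext_inner_left ℝ fun y => ?_
  calc ⟪y, ((S t)†) x - x⟫ = ⟪∫ s in 0..t, S s y, z⟫ :=
        hS.inner_adjoint_apply_sub_of_adjTo h (le_of_lt ht) y
    _ = ∫ s in 0..t, ⟪y, ((S s)†) z⟫ := by
        rw [real_inner_comm, ← intervalIntegral_inner
          (hS.intervalIntegrable_apply y le_rfl (le_of_lt ht))]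
        simp only [real_inner_comm z, adjoint_inner_right]
    _ = ⟪y, ∫ s in 0..t, ((S s)†) z⟫ :=
        intervalIntegral_inner (hS.adjoint.intervalIntegrable_apply z le_rfl (le_of_lt ht)) y

end IsC0Semigroup

end Adjoint

namespace IsC0Semigroup

variable {S : ℝ → H →L[ℝ] H}

theorem hasDerivWithinAt_apply_sub_of_genTo (hS : IsC0Semigroup S) {ψ : ℝ → H} {ψ' : H}
    {s t : ℝ} (hψ : HasDerivWithinAt ψ ψ' (Ioi s) s) (hgen : genTo S (ψ s) ψ') (hst : s < t) :
    HasDerivWithinAt (fun u => S (t - u) (ψ u)) 0 (Ioi s) s := by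
  rw [hasDerivWithinAt_Ioi_iff_tendsto_slope_zero]
  have hw : Tendsto (fun h => h⁻¹ • (ψ (s + h) - ψ s) - h⁻¹ • (S h (ψ s) - ψ s))
      (𝓝[>] 0) (𝓝 0) := by
    simpa using (hasDerivWithinAt_Ioi_iff_tendsto_slope_zero.1 hψ).sub hgen
  have hu : Tendsto (fun h => t - s - h) (𝓝[>] 0) (𝓝[Ici 0] (t - s)) := by
    refine tendsto_nhdsWithin_of_tendsto_nhds_of_eventually_within _ ?_ ?_
    · simpa using ((continuous_sub_left (t - s)).tendsto 0).mono_left nhdsWithin_le_nhds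
    · filter_upwards [Ioo_mem_nhdsGT (sub_pos.2 hst)] with h hh
      exact mem_Ici.2 (by linarith [hh.2])
  have hlim := hS.tendsto_apply (sub_nonneg.2 hst.le) hu hw
  rw [_root_.map_zero] at hlim
  refine hlim.congr' ?_
  filter_upwards [Ioo_mem_nhdsGT (sub_pos.2 hst)] with h hh
  have hsplit : S (t - s) = S (t - s - h) ∘L S h := by
    rw [← hS.map_add _ _ (by linarith [hh.2]) hh.1.le, sub_add_cancel]
  rw [hsplit, comp_apply, ← smul_sub, sub_sub_sub_cancel_right, map_smul, map_sub,
    sub_add_eq_sub_sub]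

theorem apply_comp_eq_of_genTo (hS : IsC0Semigroup S) {T : ℝ → H →L[ℝ] H}
    (hT : IsC0Semigroup T) (Q : H →L[ℝ] H) {x z : H} (hxz : genTo T x z)
    (hQ : ∀ s, 0 ≤ s → genTo S (Q (T s x)) (Q (T s z))) {t : ℝ} (ht : 0 ≤ t) :
    S t (Q x) = Q (T t x) := by
  have hcont : ContinuousOn (fun u => S (t - u) (Q (T u x))) (Icc 0 t) := by
    intro u hu
    have hsub : Tendsto (fun u => t - u) (𝓝[Icc 0 t] u) (𝓝[Ici 0] (t - u)) :=
      tendsto_nhdsWithin_of_tendsto_nhds_of_eventually_within _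
        (((continuous_sub_left t).tendsto u).mono_left nhdsWithin_le_nhds)
        (eventually_nhdsWithin_of_forall fun v hv => mem_Ici.2 (sub_nonneg.2 hv.2))
    exact hS.tendsto_apply (sub_nonneg.2 hu.2) hsub ((Q.continuous.tendsto _).comp
      ((hT.continuousOn_apply x).mono Icc_subset_Ici_self u hu))
  have hconst := constant_of_has_deriv_right_zero hcont (fun s hs =>
    hasDerivWithinAt_Ioi_iff_Ici.1 (hS.hasDerivWithinAt_apply_sub_of_genTo
      (Q.hasFDerivAt.comp_hasDerivWithinAt s (hT.hasDerivWithinAt_of_genTo hxz hs.1))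
      (hQ s hs.1) hs.2)) t ⟨ht, le_rfl⟩
  simpa [hS.map_zero, hT.map_zero] using hconst.symm

end IsC0Semigroup

theorem statement0
    (S : ℝ → H →L[ℝ] H)
    (hS0 : S 0 = 1)
    (hSadd : ∀ s t : ℝ, 0 ≤ s → 0 ≤ t → S (s + t) = (S s).comp (S t))
    (hScont : ∀ x : H, ContinuousOn (fun t => S t x) (Set.Ici 0))
    (Q : H →L[ℝ] H) :
    (∀ x z : H, adjTo S x z → genTo S (Q x) (Q z)) ↔
      (∀ t : ℝ, 0 ≤ t → (S t).comp Q = Q.comp (ContinuousLinearMap.adjoint (S t))) := by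
  have hS : IsC0Semigroup S := ⟨hS0, hSadd, hScont⟩
  constructor
  · intro hgen t ht
    refine ContinuousLinearMap.ext_on (s := adjDomain S)
      (by simpa only [Submodule.span_eq] using hS.dense_adjDomain) ?_
    rintro x ⟨z, hxz⟩
    exact hS.apply_comp_eq_of_genTo hS.adjoint Q (hS.genTo_adjoint_of_adjTo hxz)
      (fun s hs => hgen _ _ (hS.adjTo_adjoint_apply hxz hs)) ht
  · intro hcomm x z hxz
    exact genTo_map_of_comp_eq hcomm (hS.genTo_adjoint_of_adjTo hxz)
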